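/- arXiv:2407.00479 — 3 statements merged into one kernel-verified Lean document; each statement's English description precedes it below -/
import Mathlib

section
/- Let M be a maximally monotone subset of B of type (NI) and let c ∈ B. Then there exists b* ∈ M^♯ such that r̃(Lc − b*) = 0. -/
/-!
Translate `M` by `c`. By maximality the epigraph of the Fitzpatrick function of `M - c` lies on or
above the graph of `q`, while the open convex set strictly below `-½‖·‖²` lies strictly below it
because `r ≥ 0`. A Hahn–Banach hyperplane between them is the graph of an affine map
`b ↦ σ - ⟨b, u⟩` with `u ∈ B*`: it gives `⟨·, u⟩ ≤ ½‖·‖² + σ` on `B`, hence `½‖u‖² ≤ σ`, and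
`σ ≤ q + ⟨·, u⟩` on `M - c`. For `p = Lc - u` this yields `q̃(Lm - p) ≥ ½‖u‖² + q̃(u) = r̃(u) ≥ 0`
for every `m ∈ M`, so `p ∈ M^♯`, and type (NI) forces `r̃(u) ≤ 0`, i.e. `r̃(Lc - p) = 0`.
-/

open NormedSpace

noncomputable section

variable (E : Type*) [NormedAddCommGroup E] [NormedSpace ℝ E]

/-- `B = E × E*`. -/
abbrev BSp := E × StrongDual ℝ E

/-- `B* = E* × E**`. -/
abbrev BStar := StrongDual ℝ E × StrongDual ℝ (StrongDual ℝ E)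

/-- `q(x, x*) = ⟨x, x*⟩`. -/
def qB (b : BSp E) : ℝ := b.2 b.1

/-- `r(b) = ½‖b‖² + q(b)`, where `‖(x,x*)‖² = ‖x‖² + ‖x*‖²`. -/
def rB (b : BSp E) : ℝ := (‖b.1‖ ^ 2 + ‖b.2‖ ^ 2) / 2 + qB E b

/-- `q̃(y*, y**) = ⟨y*, y**⟩`. -/
def qS (p : BStar E) : ℝ := p.2 p.1

/-- `r̃(b*) = ½‖b*‖² + q̃(b*)`. -/
def rS (p : BStar E) : ℝ := (‖p.1‖ ^ 2 + ‖p.2‖ ^ 2) / 2 + qS E p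

/-- The isometry `L(y, y*) = (y*, ŷ)`. -/
def LMap (b : BSp E) : BStar E := (b.2, inclusionInDoubleDual ℝ E b.1)

/-- A subset of `B` is monotone. -/
def IsMonot (A : Set (BSp E)) : Prop := ∀ d ∈ A, ∀ e ∈ A, 0 ≤ qB E (d - e)

/-- A subset of `B` is maximally monotone. -/
def IsMaxMonot (A : Set (BSp E)) : Prop :=
  IsMonot E A ∧ ∀ A' : Set (BSp E), IsMonot E A' → A ⊆ A' → A' = A

/-- A subset of `B*` is monotone. -/
def IsMonotStar (N : Set (BStar E)) : Prop := ∀ d ∈ N, ∀ e ∈ N, 0 ≤ qS E (d - e)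

/-- A subset of `B*` is maximally monotone. -/
def IsMaxMonotStar (N : Set (BStar E)) : Prop :=
  IsMonotStar E N ∧ ∀ N' : Set (BStar E), IsMonotStar E N' → N ⊆ N' → N' = N

/-- `A` is quasidense: `inf_{a ∈ A} r(a - b) = 0` for every `b ∈ B`. -/
def Quasidense (A : Set (BSp E)) : Prop :=
  ∀ b : BSp E, (⨅ a ∈ A, (rB E (a - b) : EReal)) = 0

/-- `P_M(b) = −inf_{m ∈ M} q(m − b)`, an extended real. -/
def PFn (M : Set (BSp E)) (b : BSp E) : EReal := -(⨅ m ∈ M, (qB E (m - b) : EReal))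

/-- `F_M(b*) = −inf_{b ∈ B} [P_M(b) + q̃(b* − Lb)]`. -/
def FFn (M : Set (BSp E)) (p : BStar E) : EReal :=
  -(⨅ b : BSp E, (PFn E M b + (qS E (p - LMap E b) : EReal)))

/-- `G_M(b*) = −inf_{m ∈ M} q̃(Lm − b*)`. -/
def GFn (M : Set (BSp E)) (p : BStar E) : EReal :=
  -(⨅ m ∈ M, (qS E (LMap E m - p) : EReal))

/-- The Gossez extension `M^♯ = {b* : G_M(b*) ≤ 0}`. -/
def Sharp (M : Set (BSp E)) : Set (BStar E) := {p | GFn E M p ≤ 0}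

/-- `M` is of type (NI): `G_M ≥ 0` on `B*`. -/
def TypeNI (M : Set (BSp E)) : Prop := ∀ p : BStar E, 0 ≤ GFn E M p

variable [CompleteSpace E] [Nontrivial E]

section ProductNorm

variable {F G : Type*} [NormedAddCommGroup F] [NormedAddCommGroup G]

/-- Half the square of the Euclidean product norm; Lean's own norm on `F × G` is the sup norm. -/
def halfSqNorm (z : F × G) : ℝ := (‖z.1‖ ^ 2 + ‖z.2‖ ^ 2) / 2

theorem continuous_halfSqNorm : Continuous (halfSqNorm : F × G → ℝ) := by
  unfold halfSqNorm; fun_prop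

variable [NormedSpace ℝ F] [NormedSpace ℝ G]

theorem convexOn_norm_sq : ConvexOn ℝ Set.univ fun x : F => ‖x‖ ^ 2 :=
  (convexOn_norm convex_univ).pow (fun x _ => norm_nonneg x) 2

theorem convexOn_halfSqNorm : ConvexOn ℝ Set.univ (halfSqNorm : F × G → ℝ) := by
  have := ((convexOn_norm_sq.comp_linearMap (LinearMap.fst ℝ F G)).add
    (convexOn_norm_sq.comp_linearMap (LinearMap.snd ℝ F G))).smul (c := (1 / 2 : ℝ)) (by norm_num)
  rw [Set.preimage_univ] at this
  refine this.congr fun z _ => ?_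
  simp only [halfSqNorm, Pi.add_apply, Function.comp_apply, LinearMap.fst_apply,
    LinearMap.snd_apply, smul_eq_mul]
  ring

theorem halfSqNorm_add_apply_nonneg (x : F) (φ : StrongDual ℝ F) :
    0 ≤ halfSqNorm (x, φ) + φ x := by
  have hφx : -(‖φ‖ * ‖x‖) ≤ φ x :=
    (abs_le.1 ((φ.le_opNorm x).trans_eq' (Real.norm_eq_abs _).symm)).1
  unfold halfSqNorm
  nlinarith [sq_nonneg (‖x‖ - ‖φ‖)]

/-- One half of the self-conjugacy of `½‖·‖²`. -/
theorem sq_opNorm_div_two_le {u : StrongDual ℝ F} {σ : ℝ}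
    (h : ∀ x, u x ≤ ‖x‖ ^ 2 / 2 + σ) : ‖u‖ ^ 2 / 2 ≤ σ := by
  have hσ : 0 ≤ σ := by simpa using h 0
  have hunit : ∀ x, ‖x‖ = 1 → ‖u‖ * ‖u x‖ ≤ ‖u‖ ^ 2 / 2 + σ := by
    intro x hx
    have h₁ := h (‖u‖ • x)
    have h₂ := h (-(‖u‖ • x))
    simp only [map_neg, map_smul, norm_neg, norm_smul, hx, smul_eq_mul, norm_norm,
      mul_one] at h₁ h₂
    rw [Real.norm_eq_abs]
    rcases abs_cases (u x) with ⟨habs, -⟩ | ⟨habs, -⟩ <;> rw [habs] <;> linarith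
  rcases (norm_nonneg u).eq_or_lt with hu | hu
  · rw [← hu]; simpa using hσ
  · have hle : ‖u‖ ≤ (‖u‖ ^ 2 / 2 + σ) / ‖u‖ :=
      ContinuousLinearMap.opNorm_le_of_unit_norm (by positivity)
        fun x hx => (le_div_iff₀ hu).2 (by linarith [hunit x hx])
    rw [le_div_iff₀ hu] at hle
    nlinarith

theorem halfSqNorm_le_of_forall_le {u : StrongDual ℝ F × StrongDual ℝ G} {σ : ℝ}
    (h : ∀ z : F × G, u.1 z.1 + u.2 z.2 ≤ halfSqNorm z + σ) : halfSqNorm u ≤ σ := by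
  unfold halfSqNorm at h ⊢
  have h₁ : ∀ y, ‖u.1‖ ^ 2 / 2 ≤ ‖y‖ ^ 2 / 2 - u.2 y + σ := fun y =>
    sq_opNorm_div_two_le fun x => by linarith [h (x, y)]
  have h₂ : ‖u.2‖ ^ 2 / 2 ≤ σ - ‖u.1‖ ^ 2 / 2 :=
    sq_opNorm_div_two_le fun y => by linarith [h₁ y]
  linarith

end ProductNorm

/-- The vertical segment from `(w, t) ∈ V` up to `(w, t') ∈ A` forces the separating hyperplane
to be non-vertical, i.e. the graph of an affine function. -/
theorem geometric_hahn_banach_open_graph {W : Type*} [NormedAddCommGroup W] [NormedSpace ℝ W]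
    {V A : Set (W × ℝ)} (hVc : Convex ℝ V) (hVo : IsOpen V) (hAc : Convex ℝ A)
    (hVA : Disjoint V A) {w : W} {t t' : ℝ} (htt' : t ≤ t') (hV : (w, t) ∈ V) (hA : (w, t') ∈ A) :
    ∃ (g : StrongDual ℝ W) (σ : ℝ), (∀ z ∈ V, g z.1 + z.2 < σ) ∧ ∀ z ∈ A, σ ≤ g z.1 + z.2 := by
  obtain ⟨f, s, hfV, hfA⟩ := geometric_hahn_banach_open hVc hVo hAc hVA
  set β := f (0, 1)
  have hf : ∀ z : W × ℝ, f z = f (z.1, 0) + z.2 * β := fun z => by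
    rw [← smul_eq_mul, ← map_smul, ← map_add]; simp
  have hβ : 0 < β := by
    have := (hfV _ hV).trans_le (hfA _ hA)
    rw [hf (w, t), hf (w, t')] at this
    nlinarith
  have hg : ∀ z : W × ℝ, (β⁻¹ • f.comp (ContinuousLinearMap.inl ℝ W ℝ)) z.1 + z.2 = f z / β := by
    intro z
    rw [hf z, eq_div_iff hβ.ne']
    simp only [smul_apply, ContinuousLinearMap.comp_apply, ContinuousLinearMap.inl_apply,
      smul_eq_mul]
    field_simp
  refine ⟨β⁻¹ • f.comp (ContinuousLinearMap.inl ℝ W ℝ), s / β, fun z hz => ?_, fun z hz => ?_⟩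
  · rw [hg, div_lt_div_iff_of_pos_right hβ]; exact hfV z hz
  · rw [hg, div_le_div_iff_of_pos_right hβ]; exact hfA z hz

section MaximalMonotone

variable {X : Type*} [NormedAddCommGroup X] [NormedSpace ℝ X] {M : Set (BSp X)}

theorem qB_sub (a b : BSp X) : qB X (a - b) = qB X a - (a.2 b.1 + b.2 a.1) + qB X b := by
  simp only [qB, Prod.fst_sub, Prod.snd_sub, map_sub, sub_apply]; ring

theorem rB_eq_halfSqNorm_add (b : BSp X) : rB X b = halfSqNorm b + qB X b := rfl

theorem rS_eq_halfSqNorm_add (p : BStar X) : rS X p = halfSqNorm p + qS X p := rfl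

theorem rB_nonneg (b : BSp X) : 0 ≤ rB X b := halfSqNorm_add_apply_nonneg b.1 b.2

theorem rS_nonneg (p : BStar X) : 0 ≤ rS X p := halfSqNorm_add_apply_nonneg p.1 p.2

theorem LMap_sub (a b : BSp X) : LMap X (a - b) = LMap X a - LMap X b := by
  simp [LMap]

theorem qS_LMap_add (b : BSp X) (u : BStar X) :
    qS X (LMap X b + u) = qB X b + (u.1 b.1 + u.2 b.2) + qS X u := by
  simp only [qS, LMap, qB, Prod.fst_add, Prod.snd_add, map_add, add_apply, dual_def]
  ring

theorem IsMonot.preimage_add {A : Set (BSp X)} (hA : IsMonot X A) (c : BSp X) :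
    IsMonot X ((· + c) ⁻¹' A) := fun d hd e he => by
  simpa only [add_sub_add_right_eq_sub] using hA _ hd _ he

theorem IsMaxMonot.preimage_add (hM : IsMaxMonot X M) (c : BSp X) :
    IsMaxMonot X ((· + c) ⁻¹' M) := by
  refine ⟨hM.1.preimage_add c, fun A' hA' hMA' => ?_⟩
  have hA'M : (· + -c) ⁻¹' A' = M :=
    hM.2 _ (hA'.preimage_add (-c)) fun m hm => hMA' (by simpa using hm)
  rw [← hA'M]
  ext b
  simp

theorem IsMaxMonot.nonempty (hM : IsMaxMonot X M) : M.Nonempty := by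
  rw [Set.nonempty_iff_ne_empty]
  rintro rfl
  have h0 : IsMonot X {0} := by
    rintro d rfl e rfl
    simp [qB]
  exact Set.singleton_ne_empty _ (hM.2 _ h0 (Set.empty_subset _))

theorem IsMaxMonot.mem_of_forall_nonneg (hM : IsMaxMonot X M) {b : BSp X}
    (h : ∀ m ∈ M, 0 ≤ qB X (m - b)) : b ∈ M := by
  have hqB_swap : ∀ m, qB X (b - m) = qB X (m - b) := fun m => by
    rw [qB_sub, qB_sub]; ring
  have hins : IsMonot X (insert b M) := by
    rintro d (rfl | hd) e (rfl | he)
    · simp [qB]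
    · rw [hqB_swap]; exact h e he
    · exact h d hd
    · exact hM.1 d hd e he
  rw [← hM.2 _ hins (Set.subset_insert b M)]
  exact Set.mem_insert b M

/-- The epigraph of the Fitzpatrick function `φ_M(b) = sup_{m ∈ M} (⟨b, Lm⟩ - q(m))`. -/
def fitzpatrickEpigraph (M : Set (BSp X)) : Set (BSp X × ℝ) :=
  {z | ∀ m ∈ M, m.2 z.1.1 + z.1.2 m.1 - qB X m ≤ z.2}

theorem convex_fitzpatrickEpigraph (M : Set (BSp X)) : Convex ℝ (fitzpatrickEpigraph M) := by
  have hlin : ∀ m : BSp X, IsLinearMap ℝ fun z : BSp X × ℝ => m.2 z.1.1 + z.1.2 m.1 - z.2 :=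
    fun m => ⟨fun z w => by simp only [Prod.fst_add, Prod.snd_add, map_add, add_apply]; ring,
      fun a z => by
        simp only [Prod.smul_fst, Prod.smul_snd, map_smul, smul_apply, smul_eq_mul]; ring⟩
  have : fitzpatrickEpigraph M = ⋂ m ∈ M, {z | m.2 z.1.1 + z.1.2 m.1 - z.2 ≤ qB X m} := by
    ext z
    simp only [fitzpatrickEpigraph, Set.mem_iInter, Set.mem_ofPred_eq, sub_le_comm]
  rw [this]
  exact convex_iInter₂ fun m _ => convex_halfSpace_le (hlin m) _

theorem IsMonot.mk_mem_fitzpatrickEpigraph (hM : IsMonot X M) {m : BSp X} (hm : m ∈ M) {t : ℝ}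
    (ht : qB X m ≤ t) : (m, t) ∈ fitzpatrickEpigraph M := fun m' hm' => by
  linarith [hM m' hm' m hm, qB_sub m' m]

theorem IsMaxMonot.qB_le_of_mem_fitzpatrickEpigraph (hM : IsMaxMonot X M) {z : BSp X × ℝ}
    (hz : z ∈ fitzpatrickEpigraph M) : qB X z.1 ≤ z.2 := by
  by_contra! hlt
  have hpos : ∀ m ∈ M, 0 < qB X (m - z.1) := fun m hm => by
    linarith [hz m hm, qB_sub m z.1]
  simpa [qB] using hpos z.1 (hM.mem_of_forall_nonneg fun m hm => (hpos m hm).le)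

theorem GFn_le_neg_iff {p : BStar X} {ρ : ℝ} :
    GFn X M p ≤ -ρ ↔ ∀ m ∈ M, ρ ≤ qS X (LMap X m - p) := by
  simp only [GFn, EReal.neg_le_neg_iff, le_iInf₂_iff, EReal.coe_le_coe_iff]

theorem mem_sharp_of_forall_nonneg {p : BStar X} (h : ∀ m ∈ M, 0 ≤ qS X (LMap X m - p)) :
    p ∈ Sharp X M := by
  simpa [Sharp] using GFn_le_neg_iff.2 h

theorem TypeNI.nonpos_of_forall_le (hNI : TypeNI X M) {p : BStar X} {ρ : ℝ}
    (h : ∀ m ∈ M, ρ ≤ qS X (LMap X m - p)) : ρ ≤ 0 := by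
  have h0 : (0 : EReal) ≤ -ρ := (hNI p).trans (GFn_le_neg_iff.2 h)
  rw [EReal.le_neg, neg_zero] at h0
  exact_mod_cast h0

/-- Separate the Fitzpatrick epigraph of `M` from the open convex set strictly below `-½‖·‖²`;
they are disjoint because the Fitzpatrick function dominates `q` and `r ≥ 0`. -/
theorem IsMaxMonot.exists_le_halfSqNorm_add (hM : IsMaxMonot X M) :
    ∃ (u : BStar X) (σ : ℝ), (∀ d : BSp X, u.1 d.1 + u.2 d.2 ≤ halfSqNorm d + σ) ∧
      ∀ m ∈ M, σ ≤ qB X m + (u.1 m.1 + u.2 m.2) := by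
  set V : Set (BSp X × ℝ) := {z | z.2 + halfSqNorm z.1 < 0}
  have hVc : Convex ℝ V := by
    have hfst := (convexOn_halfSqNorm (F := X)).comp_linearMap (LinearMap.fst ℝ (BSp X) ℝ)
    rw [Set.preimage_univ] at hfst
    simpa using (((LinearMap.snd ℝ (BSp X) ℝ).convexOn convex_univ).add hfst).convex_lt 0
  have hVo : IsOpen V :=
    isOpen_lt (continuous_snd.add (continuous_halfSqNorm.comp continuous_fst)) continuous_const
  have hVA : Disjoint V (fitzpatrickEpigraph M) := Set.disjoint_left.2 fun z hzV hzA => by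
    have hz : z.2 + halfSqNorm z.1 < 0 := hzV
    linarith [hM.qB_le_of_mem_fitzpatrickEpigraph hzA, rB_nonneg z.1,
      rB_eq_halfSqNorm_add z.1]
  obtain ⟨m₀, hm₀⟩ := hM.nonempty
  obtain ⟨g, σ, hgV, hgA⟩ := geometric_hahn_banach_open_graph hVc hVo
    (convex_fitzpatrickEpigraph M) hVA (w := m₀) (t := -halfSqNorm m₀ - 1) (t' := qB X m₀)
    (by linarith [rB_nonneg m₀, rB_eq_halfSqNorm_add m₀])
    (show -halfSqNorm m₀ - 1 + halfSqNorm m₀ < 0 by linarith)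
    (hM.1.mk_mem_fitzpatrickEpigraph hm₀ le_rfl)
  refine ⟨(g.comp (.inl ℝ X _), g.comp (.inr ℝ X _)), σ, fun d => ?_, fun m hm => ?_⟩
  · rw [g.comp_inl_add_comp_inr]
    refine le_of_forall_pos_lt_add fun ε hε => ?_
    have := hgV (d, -halfSqNorm d - ε) (show -halfSqNorm d - ε + halfSqNorm d < 0 by linarith)
    simp only at this
    linarith
  · rw [g.comp_inl_add_comp_inr]
    linarith [hgA _ (hM.1.mk_mem_fitzpatrickEpigraph hm le_rfl)]

end MaximalMonotone

/-- If `M` is maximally monotone of type (NI) and `c ∈ B`, then there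
exists `b* ∈ M^♯` with `r̃(Lc − b*) = 0`. -/
theorem exists_sharp_rS_eq_zero (M : Set (BSp E)) (hM : IsMaxMonot E M) (hNI : TypeNI E M)
    (c : BSp E) :
    ∃ p ∈ Sharp E M, rS E (LMap E c - p) = 0 := by
  obtain ⟨u, σ, hle, hge⟩ := (hM.preimage_add c).exists_le_halfSqNorm_add
  have hu : halfSqNorm u ≤ σ := halfSqNorm_le_of_forall_le hle
  have hkey : ∀ m ∈ M, rS E u ≤ qS E (LMap E m - (LMap E c - u)) := fun m hm => by
    have hsplit : LMap E m - (LMap E c - u) = LMap E (m - c) + u := by rw [LMap_sub]; abel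
    rw [hsplit, qS_LMap_add]
    have := hge (m - c) (by simpa using hm)
    linarith [rS_eq_halfSqNorm_add u]
  have hu0 : rS E u = 0 := le_antisymm (hNI.nonpos_of_forall_le hkey) (rS_nonneg u)
  refine ⟨LMap E c - u, mem_sharp_of_forall_nonneg (hu0 ▸ hkey), ?_⟩
  rwa [sub_sub_cancel (LMap E c) u]
end
end

section
/- Let E be a reflexive real Banach space and M a maximally monotone subset of B. Then M is of type (NI), and M^♯ = L(M). -/
open NormedSpace

noncomputable section

variable (E : Type*) [NormedAddCommGroup E] [NormedSpace ℝ E]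

/-!
Under reflexivity every `b* ∈ B*` is `L c` for some `c ∈ B`, and `G_M (L c) = P_M c`,
because `L` turns `q` into `q̃`. For `c ∈ M` monotonicity gives `P_M c = 0`; for `c ∉ M`
maximality gives some `m ∈ M` with `q (m - c) < 0`, i.e. `P_M c > 0`. So `G_M ≥ 0`, and
`G_M (L c) ≤ 0` exactly when `c ∈ M`.
-/

section

variable {E}

lemma qB_sub_comm (a b : BSp E) : qB E (a - b) = qB E (b - a) := by
  simp only [qB, Prod.fst_sub, Prod.snd_sub, map_sub, sub_apply]
  ring

lemma qS_LMap_sub_LMap (a b : BSp E) : qS E (LMap E a - LMap E b) = qB E (a - b) := by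
  simp only [qS, qB, LMap, Prod.fst_sub, Prod.snd_sub, map_sub, sub_apply, dual_def]
  ring

lemma GFn_LMap (M : Set (BSp E)) (c : BSp E) : GFn E M (LMap E c) = PFn E M c := by
  simp only [GFn, PFn, qS_LMap_sub_LMap]

lemma PFn_nonpos_iff_forall_qB_nonneg {M : Set (BSp E)} {c : BSp E} :
    PFn E M c ≤ 0 ↔ ∀ m ∈ M, 0 ≤ qB E (m - c) := by
  simp only [PFn, EReal.neg_le_zero, le_iInf₂_iff, EReal.coe_nonneg]

lemma isMonot_insert {A : Set (BSp E)} (hA : IsMonot E A) {c : BSp E}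
    (hc : ∀ a ∈ A, 0 ≤ qB E (a - c)) : IsMonot E (insert c A) := by
  rintro d (rfl | hd) e (rfl | he)
  · simp [qB]
  · rw [qB_sub_comm]
    exact hc e he
  · exact hc d hd
  · exact hA d hd e he

lemma IsMaxMonot.mem_of_forall_qB_nonneg {M : Set (BSp E)} (hM : IsMaxMonot E M) {c : BSp E}
    (hc : ∀ m ∈ M, 0 ≤ qB E (m - c)) : c ∈ M :=
  hM.2 _ (isMonot_insert hM.1 hc) (Set.subset_insert c M) ▸ Set.mem_insert c M

lemma IsMaxMonot.PFn_nonpos_iff {M : Set (BSp E)} (hM : IsMaxMonot E M) {c : BSp E} :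
    PFn E M c ≤ 0 ↔ c ∈ M :=
  PFn_nonpos_iff_forall_qB_nonneg.trans
    ⟨hM.mem_of_forall_qB_nonneg, fun hc m hm => hM.1 m hm c hc⟩

lemma IsMaxMonot.PFn_nonneg {M : Set (BSp E)} (hM : IsMaxMonot E M) (c : BSp E) :
    0 ≤ PFn E M c := by
  by_cases hc : c ∈ M
  · have hinf : (⨅ m ∈ M, (qB E (m - c) : EReal)) ≤ 0 :=
      (iInf₂_le c hc).trans (by simp [qB])
    simpa only [PFn, EReal.neg_nonneg] using hinf
  · exact (not_le.mp (mt hM.PFn_nonpos_iff.mp hc)).le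

lemma LMap_surjective (hrefl : Function.Surjective (inclusionInDoubleDual ℝ E)) :
    Function.Surjective (LMap E) := by
  rintro ⟨y', y''⟩
  obtain ⟨y, rfl⟩ := hrefl y''
  exact ⟨(y, y'), rfl⟩

end

variable [CompleteSpace E] [Nontrivial E]

/-- If `E` is reflexive and `M` is maximally monotone, then `M` is of
type (NI) and `M^♯ = L(M)`. -/
theorem typeNI_and_sharp_eq_image_of_reflexive
    (hrefl : Function.Surjective (inclusionInDoubleDual ℝ E))
    (M : Set (BSp E)) (hM : IsMaxMonot E M) :
    TypeNI E M ∧ Sharp E M = LMap E '' M := by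
  have hL := LMap_surjective hrefl
  refine ⟨fun p => ?_, Set.Subset.antisymm (fun p hp => ?_) ?_⟩
  · obtain ⟨c, rfl⟩ := hL p
    exact (hM.PFn_nonneg c).trans_eq (GFn_LMap M c).symm
  · obtain ⟨c, rfl⟩ := hL p
    exact ⟨c, hM.PFn_nonpos_iff.mp ((GFn_LMap M c).symm.trans_le hp), rfl⟩
  · rintro _ ⟨c, hc, rfl⟩
    exact (GFn_LMap M c).trans_le (hM.PFn_nonpos_iff.mpr hc)
end
end

section
/- Let M be a maximally monotone subset of B and a, b ∈ B. Then −q(b − a) ≤ 2·P_M(a) + 2·P_M(b) (as extended reals). -/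
open NormedSpace

noncomputable section

variable (E : Type*) [NormedAddCommGroup E] [NormedSpace ℝ E]

variable [CompleteSpace E] [Nontrivial E]

/-! With `c = (a + b) / 2`, the parallelogram law for the quadratic form `q` gives
`q(b - a) + 4 q(m - c) = 2 q(m - a) + 2 q(m - b)` for every `m`. Maximality of `M` provides
`m ∈ M` with `q(m - c) ≤ 0` (otherwise `M ∪ {c}` would be monotone), and `-q(m - x) ≤ P_M(x)`
for every `m ∈ M`. -/

section Lemmas

variable {F : Type*} [NormedAddCommGroup F] [NormedSpace ℝ F]

lemma qB_neg (u : BSp F) : qB F (-u) = qB F u := by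
  simp [qB]

lemma qB_smul (r : ℝ) (u : BSp F) : qB F (r • u) = r ^ 2 * qB F u := by
  simp only [qB, Prod.smul_fst, Prod.smul_snd, map_smul, smul_apply,
    smul_eq_mul]
  ring

lemma qB_add_add_qB_sub (u v : BSp F) :
    qB F (u + v) + qB F (u - v) = 2 * qB F u + 2 * qB F v := by
  simp only [qB, Prod.fst_add, Prod.snd_add, Prod.fst_sub, Prod.snd_sub, map_add, map_sub,
    add_apply, sub_apply]
  ring

lemma IsMaxMonot.exists_qB_sub_nonpos {M : Set (BSp F)} (hM : IsMaxMonot F M) (c : BSp F) :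
    ∃ m ∈ M, qB F (m - c) ≤ 0 := by
  by_contra! h
  have hmono : IsMonot F (insert c M) := by
    rintro d (rfl | hd) e (rfl | he)
    · simp [qB]
    · rw [← neg_sub, qB_neg]
      exact (h e he).le
    · exact (h d hd).le
    · exact hM.1 d hd e he
  have hc : c ∈ M := hM.2 _ hmono (Set.subset_insert c M) ▸ Set.mem_insert c M
  simpa [qB] using h c hc

lemma neg_qB_sub_le_PFn {M : Set (BSp F)} {m : BSp F} (hm : m ∈ M) (b : BSp F) :
    (-(qB F (m - b)) : EReal) ≤ PFn F M b :=
  EReal.neg_le_neg_iff.2 (iInf₂_le m hm)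

end Lemmas

/-- `−q(b − a) ≤ 2 P_M(a) + 2 P_M(b)` as extended reals. -/
theorem neg_qB_le_two_PFun_add (M : Set (BSp E)) (hM : IsMaxMonot E M) (a b : BSp E) :
    (-(qB E (b - a)) : EReal) ≤ 2 * PFn E M a + 2 * PFn E M b := by
  obtain ⟨m, hm, hmc⟩ := hM.exists_qB_sub_nonpos ((2⁻¹ : ℝ) • (a + b))
  have hpar := qB_add_add_qB_sub (m - a) (m - b)
  rw [show (m - a) + (m - b) = (2 : ℝ) • (m - (2⁻¹ : ℝ) • (a + b)) by module,
    show (m - a) - (m - b) = b - a by abel, qB_smul] at hpar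
  have hreal : -qB E (b - a) ≤ 2 * -qB E (m - a) + 2 * -qB E (m - b) := by linarith
  calc (-(qB E (b - a)) : EReal)
      ≤ 2 * (-(qB E (m - a)) : EReal) + 2 * (-(qB E (m - b)) : EReal) := by
        have hcoe := EReal.coe_le_coe_iff.2 hreal
        push_cast at hcoe
        exact hcoe
    _ ≤ 2 * PFn E M a + 2 * PFn E M b := by
      gcongr <;> exact neg_qB_sub_le_PFn hm _
end
end
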